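/- arXiv:2504.05656 — 4 statements merged into one kernel-verified Lean document; each statement's English description precedes it below -/
import Mathlib

section
/- Let A be a 3-dimensional vector space with basis {e1,e2,e3}, and define bilinear operations ≻,≺ whose only nonzero products on basis elements are e1≻e1 = e2 and e1≻e2 = e3. Then (A,≻,≺) is an anti-pre-Novikov algebra. -/
/-!
With `≺ = 0` the five axioms collapse to two conditions on `≻`: products of the form
`(x ≻ y) ≻ z` vanish, and `≻` is left-commutative. In the example, `x ≻ y` has no `e₁`-component,
so it annihilates everything from the left, and `x ≻ (y ≻ z) = x₁ y₁ z₁ e₃` is symmetric in `x, y`.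
-/

def APNAxioms {A : Type*} [AddCommGroup A] (succ prec : A → A → A) : Prop :=
  (∀ x y z : A, succ ((succ x y + prec x y) - (succ y x + prec y x)) z
      = succ y (succ x z) - succ x (succ y z)) ∧
  (∀ x y z : A, prec x (succ y z + prec y z)
      = prec (succ y x) z - prec (prec x y) z - succ y (prec x z)) ∧
  (∀ x y z : A, succ (succ x y + prec x y) z = -(prec (succ x z) y)) ∧
  (∀ x y z : A, prec (prec x y) z = prec (prec x z) y) ∧
  (∀ x y z : A, prec ((succ x y + prec x y) - (succ y x + prec y x)) z
      = succ x (succ y z + prec y z) - succ y (succ x z + prec x z))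

theorem apnAxioms_prec_zero {R A : Type*} [CommSemiring R] [AddCommGroup A] [Module R A]
    (succ : A →ₗ[R] A →ₗ[R] A) (hnil : ∀ x y z, succ (succ x y) z = 0)
    (hcomm : ∀ x y z, succ x (succ y z) = succ y (succ x z)) :
    APNAxioms (fun x y => succ x y) (fun _ _ => 0) := by
  dsimp only [APNAxioms]
  refine ⟨fun x y z => ?_, fun x y z => ?_, fun x y z => ?_, fun _ _ _ => rfl, fun x y z => ?_⟩
  · rw [hcomm y x z]
    simp only [add_zero, map_sub, LinearMap.sub_apply, hnil, sub_self]
  · simp only [map_zero, sub_zero]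
  · simp only [add_zero, hnil, neg_zero]
  · rw [add_zero, add_zero, hcomm y x z, sub_self]

section Example

variable {k A : Type*} [CommRing k] [AddCommGroup A] [Module k A]
  {b : Module.Basis (Fin 3) k A} {succ : A →ₗ[k] A →ₗ[k] A}

variable (hsucc : ∀ x y : A, succ x y
        = (b.repr x 0 * b.repr y 0) • b 1 + (b.repr x 0 * b.repr y 1) • b 2)
include hsucc

theorem repr_succ (x y : A) :
    b.repr (succ x y)
      = Finsupp.single 1 (b.repr x 0 * b.repr y 0) + Finsupp.single 2 (b.repr x 0 * b.repr y 1) := by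
  simp [hsucc, Module.Basis.repr_self]

theorem succ_succ_left_eq_zero (x y z : A) : succ (succ x y) z = 0 := by
  rw [hsucc (succ x y), repr_succ hsucc]
  simp

theorem succ_succ_right_eq (x y z : A) :
    succ x (succ y z) = (b.repr x 0 * (b.repr y 0 * b.repr z 0)) • b 2 := by
  rw [hsucc x, repr_succ hsucc]
  simp

theorem succ_left_comm (x y z : A) : succ x (succ y z) = succ y (succ x z) := by
  rw [succ_succ_right_eq hsucc, succ_succ_right_eq hsucc, mul_left_comm]

end Example

theorem stmt7 {k A : Type*} [Field k] [AddCommGroup A] [Module k A]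
    (b : Module.Basis (Fin 3) k A) (succ prec : A →ₗ[k] A →ₗ[k] A)
    (hsucc : ∀ x y : A, succ x y
        = (b.repr x 0 * b.repr y 0) • b 1 + (b.repr x 0 * b.repr y 1) • b 2)
    (hprec : ∀ x y : A, prec x y = 0) :
    APNAxioms (fun x y => succ x y) (fun x y => prec x y) := by
  have prec_eq_zero : (fun x y => prec x y) = fun _ _ => 0 := funext₂ hprec
  rw [prec_eq_zero]
  exact apnAxioms_prec_zero succ (succ_succ_left_eq_zero hsucc) (succ_left_comm hsucc)
end

section
/- Let (A,≻,≺) be an anti-pre-Novikov algebra and (V, l_≻, r_≻, l_≺, r_≺) a representation of it. Then (V, −l_≻, −r_≺) is a bimodule of the associated Novikov algebra (A,∘) where x∘y = x≻y + x≺y. -/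
def NovikovBimodule {k A V : Type*} [Field k] [AddCommGroup A] [Module k A]
    [AddCommGroup V] [Module k V]
    (circ : A →ₗ[k] A →ₗ[k] A) (l r : A →ₗ[k] V →ₗ[k] V) : Prop :=
  (∀ (x y : A) (v : V), l (circ x y - circ y x) v = l x (l y v) - l y (l x v)) ∧
  (∀ (x y : A) (v : V), l x (r y v) - r y (l x v) = r (circ x y) v - r y (r x v)) ∧
  (∀ (x y : A) (v : V), l (circ x y) v = r y (l x v)) ∧
  (∀ (x y : A) (v : V), r x (r y v) = r y (r x v))
def APNRep {k A V : Type*} [Field k] [AddCommGroup A] [Module k A]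
    [AddCommGroup V] [Module k V]
    (succ prec : A →ₗ[k] A →ₗ[k] A)
    (ls rs lp rp : A →ₗ[k] V →ₗ[k] V) : Prop :=
  (∀ (x y : A) (v : V), ls ((succ x y + prec x y) - (succ y x + prec y x)) v
      = ls y (ls x v) - ls x (ls y v)) ∧
  (∀ (x y : A) (v : V), rp (succ x y + prec x y) v
      = rp y (ls x v) - rp y (rp x v) - ls x (rp y v)) ∧
  (∀ (x y : A) (v : V), ls (succ x y + prec x y) v = -(rp y (ls x v))) ∧
  (∀ (x y : A) (v : V), lp (prec x y) v = rp y (lp x v)) ∧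
  (∀ (x y : A) (v : V), lp ((succ x y + prec x y) - (succ y x + prec y x)) v
      = ls x (ls y v + lp y v) - ls y (ls x v + lp x v)) ∧
  (∀ (x y : A) (v : V), rs x ((ls y v + lp y v) - (rs y v + rp y v))
      = rs (succ y x) v - ls y (rs x v)) ∧
  (∀ (x y : A) (v : V), lp x (ls y v + lp y v)
      = lp (succ y x) v - lp (prec x y) v - ls y (lp x v)) ∧
  (∀ (x y : A) (v : V), rp x ((ls y v + lp y v) - (rs y v + rp y v))
      = ls y (rs x v + rp x v) - rs (succ y x + prec y x) v) ∧
  (∀ (x y : A) (v : V), rs x (ls y v + lp y v) = -(lp (succ y x) v)) ∧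
  (∀ (x y : A) (v : V), rp x (rp y v) = rp y (rp x v)) ∧
  (∀ (x y : A) (v : V), lp x (rs y v + rp y v)
      = rp y (rs x v) - rp y (lp x v) - rs (prec x y) v) ∧
  (∀ (x y : A) (v : V), rs x (rs y v + rp y v) = -(rp y (rs x v)))

theorem novikovBimodule_neg_iff {k A V : Type*} [Field k] [AddCommGroup A] [Module k A]
    [AddCommGroup V] [Module k V] (circ : A →ₗ[k] A →ₗ[k] A) (l r : A →ₗ[k] V →ₗ[k] V) :
    NovikovBimodule circ (-l) (-r) ↔
      (∀ (x y : A) (v : V), l (circ x y - circ y x) v = l y (l x v) - l x (l y v)) ∧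
      (∀ (x y : A) (v : V), l x (r y v) - r y (l x v) = -r (circ x y) v - r y (r x v)) ∧
      (∀ (x y : A) (v : V), l (circ x y) v = -r y (l x v)) ∧
      (∀ (x y : A) (v : V), r x (r y v) = r y (r x v)) := by
  simp only [NovikovBimodule, LinearMap.neg_apply, map_neg, neg_neg]
  refine and_congr (forall₃_congr fun _ _ _ => ?_) <|
    and_congr Iff.rfl <| and_congr (forall₃_congr fun _ _ _ => ?_) Iff.rfl
  · rw [neg_eq_iff_eq_neg, neg_sub]
  · rw [neg_eq_iff_eq_neg]

theorem stmt8_general {k A V : Type*} [Field k] [AddCommGroup A] [Module k A]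
    [AddCommGroup V] [Module k V]
    (succ prec : A →ₗ[k] A →ₗ[k] A)
    (ls rs lp rp : A →ₗ[k] V →ₗ[k] V)
    (hrep : APNRep succ prec ls rs lp rp) :
    NovikovBimodule (succ + prec) (-ls) (-rp) := by
  obtain ⟨hls_comm, hrp_circ, hls_circ, -, -, -, -, -, -, hrp_comm, -, -⟩ := hrep
  refine (novikovBimodule_neg_iff _ ls rp).2 ⟨hls_comm, fun x y v => ?_, hls_circ, hrp_comm⟩
  rw [LinearMap.add_apply, LinearMap.add_apply, hrp_circ]
  abel

theorem stmt8 {k A V : Type*} [Field k] [AddCommGroup A] [Module k A]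
    [AddCommGroup V] [Module k V]
    (succ prec : A →ₗ[k] A →ₗ[k] A)
    (hAPN : APNAxioms (fun x y => succ x y) (fun x y => prec x y))
    (ls rs lp rp : A →ₗ[k] V →ₗ[k] V)
    (hrep : APNRep succ prec ls rs lp rp) :
    NovikovBimodule (succ + prec) (-ls) (-rp) :=
  stmt8_general succ prec ls rs lp rp hrep
end

section
/- Let (V,l,r) be a bimodule of a Novikov algebra (A,∘) and T: V → A an anti-O-operator, i.e. T(u)∘T(v) = −T(l(T(u))v + r(T(v))u) for all u,v ∈ V. Define u≻v := −l(T(u))v and u≺v := −r(T(v))u, and u·v := u≻v + u≺v. Then for all u,v,w ∈ V: (v·u − u·v)≻w = u≻(v≻w) − v≻(u≻w); (u≻w)≺v − u≻(w≺v) = w≺(u·v) + (w≺u)≺v; (u·v)≻w = −(u≻w)≺v; and (w≺v)≺u = (w≺u)≺v. -/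
def NovikovAxioms {A : Type*} [AddCommGroup A] (circ : A → A → A) : Prop :=
  (∀ x y z : A, circ (circ x y) z - circ x (circ y z)
      = circ (circ y x) z - circ y (circ x z)) ∧
  (∀ x y z : A, circ (circ x y) z = circ (circ x z) y)
/-!
The anti-O-operator condition says exactly that `T (u · v) = T u ∘ T v`. Hence every `T`-image of
a product on `V` can be replaced by a product in `A`, after which each identity is the
corresponding bimodule axiom of `(V, l, r)`, up to signs.
-/

section AntiOOperator

variable {k A V : Type*} [Field k] [AddCommGroup A] [Module k A] [AddCommGroup V] [Module k V]
  {circ : A →ₗ[k] A →ₗ[k] A} {l r : A →ₗ[k] V →ₗ[k] V} {T : V →ₗ[k] A}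

def IsAntiOOperator (circ : A →ₗ[k] A →ₗ[k] A) (l r : A →ₗ[k] V →ₗ[k] V)
    (T : V →ₗ[k] A) : Prop :=
  ∀ u v : V, circ (T u) (T v) = -T (l (T u) v + r (T v) u)

/-- `u ≻ v` in the paper. -/
def antiOSucc (l : A →ₗ[k] V →ₗ[k] V) (T : V →ₗ[k] A) (u v : V) : V := -l (T u) v

/-- `u ≺ v` in the paper. -/
def antiOPrec (r : A →ₗ[k] V →ₗ[k] V) (T : V →ₗ[k] A) (u v : V) : V := -r (T v) u

/-- `u · v` in the paper. -/
def antiOMul (l r : A →ₗ[k] V →ₗ[k] V) (T : V →ₗ[k] A) (u v : V) : V :=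
  antiOSucc l T u v + antiOPrec r T u v

theorem IsAntiOOperator.map_antiOMul (hT : IsAntiOOperator circ l r T) (u v : V) :
    T (antiOMul l r T u v) = circ (T u) (T v) := by
  rw [hT, antiOMul, antiOSucc, antiOPrec, ← neg_add, map_neg]

theorem antiOSucc_antiOMul_sub_antiOMul (hBim : NovikovBimodule circ l r)
    (hT : IsAntiOOperator circ l r T) (u v w : V) :
    antiOSucc l T (antiOMul l r T v u - antiOMul l r T u v) w
      = antiOSucc l T u (antiOSucc l T v w) - antiOSucc l T v (antiOSucc l T u w) := by
  rw [antiOSucc, map_sub, hT.map_antiOMul, hT.map_antiOMul, hBim.1]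
  simp only [antiOSucc, map_neg, neg_neg]
  abel

theorem antiOPrec_antiOSucc_sub_antiOSucc_antiOPrec (hBim : NovikovBimodule circ l r)
    (hT : IsAntiOOperator circ l r T) (u v w : V) :
    antiOPrec r T (antiOSucc l T u w) v - antiOSucc l T u (antiOPrec r T w v)
      = antiOPrec r T w (antiOMul l r T u v) + antiOPrec r T (antiOPrec r T w u) v := by
  have h := hBim.2.1 (T u) (T v) w
  simp only [antiOPrec, antiOSucc, hT.map_antiOMul, map_neg, neg_neg]
  linear_combination (norm := module) -h

theorem antiOSucc_antiOMul (hBim : NovikovBimodule circ l r) (hT : IsAntiOOperator circ l r T)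
    (u v w : V) : antiOSucc l T (antiOMul l r T u v) w = -antiOPrec r T (antiOSucc l T u w) v := by
  simp only [antiOSucc, antiOPrec, hT.map_antiOMul, hBim.2.2.1, map_neg, neg_neg]

theorem antiOPrec_antiOPrec_comm (hBim : NovikovBimodule circ l r) (u v w : V) :
    antiOPrec r T (antiOPrec r T w v) u = antiOPrec r T (antiOPrec r T w u) v := by
  simp only [antiOPrec, map_neg, neg_neg, hBim.2.2.2]

end AntiOOperator

theorem stmt10_general {k A V : Type*} [Field k] [AddCommGroup A] [Module k A]
    [AddCommGroup V] [Module k V]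
    (circ : A →ₗ[k] A →ₗ[k] A) (l r : A →ₗ[k] V →ₗ[k] V)
    (hBim : NovikovBimodule circ l r)
    (T : V →ₗ[k] A)
    (hT : ∀ u v : V, circ (T u) (T v) = -T (l (T u) v + r (T v) u))
    (sd pd : V → V → V)
    (hsd : ∀ u v, sd u v = -(l (T u) v))
    (hpd : ∀ u v, pd u v = -(r (T v) u)) :
    (∀ u v w : V, sd ((sd v u + pd v u) - (sd u v + pd u v)) w
        = sd u (sd v w) - sd v (sd u w)) ∧
    (∀ u v w : V, pd (sd u w) v - sd u (pd w v)
        = pd w (sd u v + pd u v) + pd (pd w u) v) ∧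
    (∀ u v w : V, sd (sd u v + pd u v) w = -(pd (sd u w) v)) ∧
    (∀ u v w : V, pd (pd w v) u = pd (pd w u) v) := by
  obtain rfl : sd = antiOSucc l T := funext₂ hsd
  obtain rfl : pd = antiOPrec r T := funext₂ hpd
  exact ⟨antiOSucc_antiOMul_sub_antiOMul hBim hT,
    antiOPrec_antiOSucc_sub_antiOSucc_antiOPrec hBim hT, antiOSucc_antiOMul hBim hT,
    antiOPrec_antiOPrec_comm hBim⟩

theorem stmt10 {k A V : Type*} [Field k] [AddCommGroup A] [Module k A]
    [AddCommGroup V] [Module k V]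
    (circ : A →ₗ[k] A →ₗ[k] A) (l r : A →ₗ[k] V →ₗ[k] V)
    (hNov : NovikovAxioms (fun x y => circ x y))
    (hBim : NovikovBimodule circ l r)
    (T : V →ₗ[k] A)
    (hT : ∀ u v : V, circ (T u) (T v) = -T (l (T u) v + r (T v) u))
    (sd pd : V → V → V)
    (hsd : ∀ u v, sd u v = -(l (T u) v))
    (hpd : ∀ u v, pd u v = -(r (T v) u)) :
    (∀ u v w : V, sd ((sd v u + pd v u) - (sd u v + pd u v)) w
        = sd u (sd v w) - sd v (sd u w)) ∧
    (∀ u v w : V, pd (sd u w) v - sd u (pd w v)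
        = pd w (sd u v + pd u v) + pd (pd w u) v) ∧
    (∀ u v w : V, sd (sd u v + pd u v) w = -(pd (sd u w) v)) ∧
    (∀ u v w : V, pd (pd w v) u = pd (pd w u) v) :=
  stmt10_general circ l r hBim T hT sd pd hsd hpd
end

section
/- Let (A,∘) be the 2-dimensional Novikov algebra over a field k with basis {e1,e2} and nonzero products e1∘e1 = e1, e2∘e1 = e2. For a ∈ k, define T: A → A by T(e1) = a·e2, T(e2) = 0. Then T is a strong anti-Rota-Baxter operator on (A,∘): T(x)∘T(y) = −T(T(x)∘y + x∘T(y)) and [T(x),T(y)]∘z + y∘(T(x)∘T(z)) − x∘(T(y)∘T(z)) = 0 for all x,y,z ∈ A, where [x,y] = x∘y − y∘x. -/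
/-!
`T` maps `A` into the line `k • e₂`, and both `x ∘ e₂ = 0` and `T e₂ = 0`. Hence `x ∘ T y = 0`
and `T (T x ∘ y) = 0` for all `x, y`, and each term of the two defining identities vanishes.
-/

section General

variable {R M : Type*} [CommRing R] [AddCommGroup M] [Module R M]

def IsAntiRotaBaxter (circ : M →ₗ[R] M →ₗ[R] M) (T : M →ₗ[R] M) : Prop :=
  ∀ x y : M, circ (T x) (T y) = -T (circ (T x) y + circ x (T y))

def IsStrongAntiRotaBaxterIdentity (circ : M →ₗ[R] M →ₗ[R] M) (T : M →ₗ[R] M) : Prop :=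
  ∀ x y z : M,
    circ (circ (T x) (T y) - circ (T y) (T x)) z
      + circ y (circ (T x) (T z)) - circ x (circ (T y) (T z)) = 0

variable {circ : M →ₗ[R] M →ₗ[R] M} {T : M →ₗ[R] M}

theorem isAntiRotaBaxter_of_circ_apply_eq_zero (hright : ∀ x y, circ x (T y) = 0)
    (hTcirc : ∀ x y, T (circ (T x) y) = 0) : IsAntiRotaBaxter circ T := by
  intro x y
  rw [hright, hright, add_zero, hTcirc, neg_zero]

theorem isStrongAntiRotaBaxterIdentity_of_circ_apply_eq_zero
    (hright : ∀ x y, circ x (T y) = 0) : IsStrongAntiRotaBaxterIdentity circ T := by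
  intro x y z
  simp only [hright, sub_self, map_zero, LinearMap.zero_apply, add_zero]

end General

section TwoDim

variable {k A : Type*} [CommRing k] [AddCommGroup A] [Module k A]
  {b : Module.Basis (Fin 2) k A}

theorem circ_eq_zero_of_repr_zero {circ : A →ₗ[k] A →ₗ[k] A}
    (hcirc : ∀ x y : A, circ x y
      = (b.repr x 0 * b.repr y 0) • b 0 + (b.repr x 1 * b.repr y 0) • b 1)
    (x : A) {y : A} (hy : b.repr y 0 = 0) : circ x y = 0 := by
  simp [hcirc, hy]

theorem repr_circ_zero {circ : A →ₗ[k] A →ₗ[k] A}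
    (hcirc : ∀ x y : A, circ x y
      = (b.repr x 0 * b.repr y 0) • b 0 + (b.repr x 1 * b.repr y 0) • b 1)
    (x y : A) : b.repr (circ x y) 0 = b.repr x 0 * b.repr y 0 := by
  simp [hcirc]

variable {a : k} {T : A →ₗ[k] A}

theorem apply_eq_smul_of_apply_basis (hT0 : T (b 0) = a • b 1) (hT1 : T (b 1) = 0) (x : A) :
    T x = (a * b.repr x 0) • b 1 := by
  conv_lhs => rw [← b.sum_repr x]
  rw [map_sum, Fin.sum_univ_two, map_smul, map_smul, hT0, hT1, smul_smul, smul_zero, add_zero,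
    mul_comm]

theorem repr_apply_zero_of_apply_basis (hT0 : T (b 0) = a • b 1) (hT1 : T (b 1) = 0) (x : A) :
    b.repr (T x) 0 = 0 := by
  simp [apply_eq_smul_of_apply_basis hT0 hT1]

theorem apply_eq_zero_of_repr_zero (hT0 : T (b 0) = a • b 1) (hT1 : T (b 1) = 0) {x : A}
    (hx : b.repr x 0 = 0) : T x = 0 := by
  rw [apply_eq_smul_of_apply_basis hT0 hT1, hx, mul_zero, zero_smul]

end TwoDim

theorem stmt13 {k A : Type*} [Field k] [AddCommGroup A] [Module k A]
    (b : Module.Basis (Fin 2) k A) (circ : A →ₗ[k] A →ₗ[k] A)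
    (hcirc : ∀ x y : A, circ x y
        = (b.repr x 0 * b.repr y 0) • b 0 + (b.repr x 1 * b.repr y 0) • b 1)
    (a : k) (T : A →ₗ[k] A)
    (hT0 : T (b 0) = a • b 1) (hT1 : T (b 1) = 0) :
    (∀ x y : A, circ (T x) (T y) = -T (circ (T x) y + circ x (T y))) ∧
    (∀ x y z : A,
      circ (circ (T x) (T y) - circ (T y) (T x)) z
        + circ y (circ (T x) (T z)) - circ x (circ (T y) (T z)) = 0) := by
  have hright : ∀ x y, circ x (T y) = 0 := fun x y =>
    circ_eq_zero_of_repr_zero hcirc x (repr_apply_zero_of_apply_basis hT0 hT1 y)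
  have hTcirc : ∀ x y, T (circ (T x) y) = 0 := fun x y =>
    apply_eq_zero_of_repr_zero hT0 hT1 <| by
      rw [repr_circ_zero hcirc, repr_apply_zero_of_apply_basis hT0 hT1, zero_mul]
  exact ⟨isAntiRotaBaxter_of_circ_apply_eq_zero hright hTcirc,
    isStrongAntiRotaBaxterIdentity_of_circ_apply_eq_zero hright⟩
end
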